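/- Let m ≥ 1 be a natural number, let B₂ ≥ 0 and B₃ > 0 be reals, let U_k ∈ (0,1) and U_sum > 0 be reals. Suppose B₂ < B₃·U_k/(1 − U_k) and 0 < (U_sum − 1)·B₂ + (U_sum − m)·B₃, and additionally U_sum ≥ 1. Then U_sum > m − (m−1)·U_k. -/

import Mathlib

theorem pos_mul_add_mul_one_sub_of_lt_mul_div {K : Type*} [Field K] [LinearOrder K]
    [IsStrictOrderedRing K] {a b c d u : K} (hc : 0 < c) (hu : u < 1) (ha : 0 ≤ a)
    (hb : b < c * u / (1 - u)) (h : 0 < a * b + d * c) :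
    0 < a * u + d * (1 - u) := by
  have hu' : 0 < 1 - u := sub_pos.2 hu
  have hfactor : 0 < c / (1 - u) * (a * u + d * (1 - u)) :=
    calc 0 < a * b + d * c := h
      _ ≤ a * (c * u / (1 - u)) + d * c := by gcongr
      _ = c / (1 - u) * (a * u + d * (1 - u)) := by field_simp
  exact pos_of_mul_pos_right hfactor (div_pos hc hu').le

theorem stmt_3_general (m : ℕ) (B₂ B₃ Uk Usum : ℝ)
    (hB₃ : 0 < B₃) (hUk1 : Uk < 1)
    (hUsum1 : 1 ≤ Usum)
    (h1 : B₂ < B₃ * Uk / (1 - Uk))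
    (h2 : 0 < (Usum - 1) * B₂ + (Usum - m) * B₃) :
    Usum > m - (m - 1) * Uk := by
  have key := pos_mul_add_mul_one_sub_of_lt_mul_div hB₃ hUk1 (sub_nonneg.2 hUsum1) h1 h2
  linarith [show (Usum - 1) * Uk + (Usum - m) * (1 - Uk) = Usum - (m - (m - 1) * Uk) by ring]

theorem stmt_3 (m : ℕ) (hm : 1 ≤ m) (B₂ B₃ Uk Usum : ℝ)
    (hB₂ : 0 ≤ B₂) (hB₃ : 0 < B₃) (hUk0 : 0 < Uk) (hUk1 : Uk < 1)
    (hUsum0 : 0 < Usum) (hUsum1 : 1 ≤ Usum)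
    (h1 : B₂ < B₃ * Uk / (1 - Uk))
    (h2 : 0 < (Usum - 1) * B₂ + (Usum - m) * B₃) :
    Usum > m - (m - 1) * Uk :=
  stmt_3_general m B₂ B₃ Uk Usum hB₃ hUk1 hUsum1 h1 h2
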